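/- Let 𝒩 be a nonempty set, k a field of characteristic 0, K = k((ε)). Let D be a K-valued dimould with D^{(∅,∅)} = 1. If (A, B) and (A', B') are two pairs of K-valued dimoulds such that A^{(∅,∅)} = A'^{(∅,∅)} = 1, A and A' take values in K_- on every pair of words (a̲, b̲) ≠ (∅, ∅), B and B' take values in K_+ on every pair of words, and B = A × D, B' = A' × D, then A = A' and B = B'. -/
import Mathlib


open scoped Classical

/-- Membership in `K_- = ε⁻¹ k[ε⁻¹]`: all coefficients of nonnegative powers vanish. -/
def Kminus {k : Type*} [Field k] (f : LaurentSeries k) : Prop :=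
  ∀ n : ℤ, 0 ≤ n → f.coeff n = 0

/-- Membership in `K_+ = k[[ε]]`: all coefficients of negative powers vanish. -/
def Kplus {k : Type*} [Field k] (f : LaurentSeries k) : Prop :=
  ∀ n : ℤ, n < 0 → f.coeff n = 0

/-- Dimould multiplication:
`(M × N)^{(a,b)} = ∑ M^{(a¹,b¹)} N^{(a²,b²)}` over all factorizations
`a = a¹ a²`, `b = b¹ b²`. -/
noncomputable def dmul {𝒩 A : Type*} [Semiring A]
    (M N : List 𝒩 × List 𝒩 → A) : List 𝒩 × List 𝒩 → A :=
  fun p => ∑ i ∈ Finset.range (p.1.length + 1), ∑ j ∈ Finset.range (p.2.length + 1),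
    M (p.1.take i, p.2.take j) * N (p.1.drop i, p.2.drop j)

/-- uniqueness of the dimould Birkhoff-type decomposition. -/
theorem dimould_decomposition_unique
    {𝒩 k : Type*} [Nonempty 𝒩] [Field k] [CharZero k]
    (D : List 𝒩 × List 𝒩 → LaurentSeries k) (hD : D ([], []) = 1)
    (A B A' B' : List 𝒩 × List 𝒩 → LaurentSeries k)
    (hA0 : A ([], []) = 1) (hA0' : A' ([], []) = 1)
    (hA : ∀ p : List 𝒩 × List 𝒩, p ≠ ([], []) → Kminus (A p))
    (hA' : ∀ p : List 𝒩 × List 𝒩, p ≠ ([], []) → Kminus (A' p))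
    (hB : ∀ p : List 𝒩 × List 𝒩, Kplus (B p))
    (hB' : ∀ p : List 𝒩 × List 𝒩, Kplus (B' p))
    (hEq : B = dmul A D) (hEq' : B' = dmul A' D) :
    A = A' ∧ B = B' := by
  have key : ∀ n : ℕ, ∀ p : List 𝒩 × List 𝒩, p.1.length + p.2.length ≤ n → A p = A' p := by
    intro n
    induction n with
    | zero =>
      intro p hp
      have h1 : p.1 = [] := List.eq_nil_of_length_eq_zero (by omega)
      have h2 : p.2 = [] := List.eq_nil_of_length_eq_zero (by omega)
      have : p = ([], []) := Prod.ext h1 h2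
      rw [this, hA0, hA0']
    | succ n ih =>
      intro p hp
      by_cases h0 : p = ([], [])
      · rw [h0, hA0, hA0']
      · have hsum : dmul A D p - dmul A' D p = A p - A' p := by
          unfold dmul
          rw [← Finset.sum_sub_distrib]
          simp only [← Finset.sum_sub_distrib, ← sub_mul]
          rw [Finset.sum_eq_single p.1.length]
          · rw [Finset.sum_eq_single p.2.length]
            · simp [List.take_length, List.drop_length, hD]
            · intro j hj hje
              have hj' : j < p.2.length := by
                have := Finset.mem_range.mp hj; omega
              have : A (p.1.take p.1.length, p.2.take j) = A' (p.1.take p.1.length, p.2.take j) := by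
                apply ih
                simp only [List.length_take]
                omega
              rw [this, sub_self, zero_mul]
            · intro h; exact absurd (Finset.self_mem_range_succ _) h
          · intro i hi hie
            have hi' : i < p.1.length := by
              have := Finset.mem_range.mp hi; omega
            apply Finset.sum_eq_zero
            intro j hj
            have hj' : j < p.2.length + 1 := Finset.mem_range.mp hj
            have : A (p.1.take i, p.2.take j) = A' (p.1.take i, p.2.take j) := by
              apply ih
              simp only [List.length_take]
              omega
            rw [this, sub_self, zero_mul]
          · intro h; exact absurd (Finset.self_mem_range_succ _) h
        have hd : A p - A' p = B p - B' p := by rw [hEq, hEq', hsum]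
        have hz : A p - A' p = 0 := by
          ext m
          rw [HahnSeries.coeff_sub, HahnSeries.coeff_zero]
          rcases le_or_gt 0 m with hm | hm
          · rw [hA p h0 m hm, hA' p h0 m hm, sub_self]
          · have := congrArg (fun f => HahnSeries.coeff f m) hd
            simp only [HahnSeries.coeff_sub] at this
            rw [this, hB p m hm, hB' p m hm, sub_self]
        exact sub_eq_zero.mp hz
  have hAA : A = A' := funext fun p => key (p.1.length + p.2.length) p le_rfl
  exact ⟨hAA, by rw [hEq, hEq', hAA]⟩
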